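/- arXiv:2308.07636 — 5 statements merged into one kernel-verified Lean document; each statement's English description precedes it below -/
import Mathlib

section
/- (Strong L_q duality, Theorem 2.1(1)) Assume n + 1 ≤ m, Ψ satisfies the discrete Haar condition, q ≥ 1, and η* > 0. Then sup_{w ∈ S} d_q(w) = (η*)^q. -/
/-!
The pairing `(w, a) ↦ ∑ w_j |f_j - (Ψ a)_j|^q` is linear in `w`, which ranges over the compact
simplex, and continuous and convex in `a` because `q ≥ 1`. Sion's minimax theorem therefore
exchanges `sup_w` and `inf_a`, and the supremum over the simplex of a linear function is attained at
a vertex, so it is `max_j |f_j - (Ψ a)_j|^q`. Finally `t ↦ t^q` is monotone and continuous on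
`[0, ∞)`, so it commutes with the maximum and with the infimum.
-/

open Set OrderDual

theorem ConvexOn.rpow {E : Type*} [AddCommMonoid E] [Module ℝ E] {s : Set E} {g : E → ℝ}
    (hg : ConvexOn ℝ s g) (hg₀ : ∀ x ∈ s, 0 ≤ g x) {p : ℝ} (hp : 1 ≤ p) :
    ConvexOn ℝ s fun x ↦ g x ^ p := by
  refine ⟨hg.1, fun x hx y hy a b ha hb hab ↦ ?_⟩
  calc g (a • x + b • y) ^ p ≤ (a • g x + b • g y) ^ p :=
        Real.rpow_le_rpow (hg₀ _ (hg.1 hx hy ha hb hab)) (hg.2 hx hy ha hb hab) (by linarith)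
    _ ≤ a • g x ^ p + b • g y ^ p := (convexOn_rpow hp).2 (hg₀ x hx) (hg₀ y hy) ha hb hab

theorem Real.rpow_iInf_of_nonneg {ι : Type*} [Nonempty ι] {g : ι → ℝ} (hg : ∀ i, 0 ≤ g i)
    {q : ℝ} (hq : 0 ≤ q) : (⨅ i, g i) ^ q = ⨅ i, g i ^ q := by
  lift g to ι → NNReal using hg
  simp only [← NNReal.coe_iInf, ← NNReal.coe_rpow]
  exact congrArg _ <| Monotone.map_ciInf_of_continuousAt
    (NNReal.continuous_rpow_const hq).continuousAt (NNReal.monotone_rpow_of_nonneg hq)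

theorem Real.rpow_iSup_of_nonneg {ι : Type*} [Finite ι] [Nonempty ι] {g : ι → ℝ} (hg : ∀ i, 0 ≤ g i)
    {q : ℝ} (hq : 0 ≤ q) : (⨆ i, g i) ^ q = ⨆ i, g i ^ q := by
  lift g to ι → NNReal using hg
  simp only [← NNReal.coe_iSup, ← NNReal.coe_rpow]
  exact congrArg _ <| Monotone.map_ciSup_of_continuousAt
    (NNReal.continuous_rpow_const hq).continuousAt (NNReal.monotone_rpow_of_nonneg hq)
    (finite_range g).bddAbove

theorem Matrix.convexOn_norm_sub_mulVec_apply {𝕜 m n : Type*} [RCLike 𝕜] [Fintype n]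
    (f : m → 𝕜) (A : Matrix m n 𝕜) (j : m) :
    ConvexOn ℝ univ fun a ↦ ‖f j - A.mulVec a j‖ := by
  let L : (n → 𝕜) →ₗ[ℝ] 𝕜 := ((LinearMap.proj j).comp A.mulVecLin).restrictScalars ℝ
  have h := convexOn_univ_norm.comp_affineMap (AffineMap.const ℝ _ (f j) - L.toAffineMap)
  rw [preimage_univ] at h
  exact h

theorem ConvexOn.sum_mul {ι E : Type*} [Fintype ι] [AddCommMonoid E] [Module ℝ E] {s : Set E}
    (hs : Convex ℝ s) {w : ι → ℝ} (hw : ∀ i, 0 ≤ w i) {h : ι → E → ℝ}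
    (hh : ∀ i, ConvexOn ℝ s (h i)) : ConvexOn ℝ s fun x ↦ ∑ i, w i * h i x := by
  refine ⟨hs, fun x hx y hy a b ha hb hab ↦ ?_⟩
  calc ∑ i, w i * h i (a • x + b • y) ≤ ∑ i, w i * (a • h i x + b • h i y) :=
        Finset.sum_le_sum fun i _ ↦ mul_le_mul_of_nonneg_left ((hh i).2 hx hy ha hb hab) (hw i)
    _ = a • ∑ i, w i * h i x + b • ∑ i, w i * h i y := by
        simp only [smul_eq_mul, Finset.mul_sum, ← Finset.sum_add_distrib]
        exact Finset.sum_congr rfl fun i _ ↦ by ring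

theorem isGreatest_sum_mul_stdSimplex {ι : Type*} [Fintype ι] [Nonempty ι] (c : ι → ℝ) :
    IsGreatest ((fun w ↦ ∑ i, w i * c i) '' stdSimplex ℝ ι) (⨆ i, c i) := by
  classical
  obtain ⟨i₀, hi₀⟩ := exists_eq_ciSup_of_finite (f := c)
  refine ⟨⟨Pi.single i₀ 1, single_mem_stdSimplex ℝ i₀, by simp [Pi.single_apply, hi₀]⟩, ?_⟩
  rintro _ ⟨w, ⟨hw₀, hw₁⟩, rfl⟩
  calc ∑ i, w i * c i ≤ ∑ i, w i * ⨆ j, c j :=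
        Finset.sum_le_sum fun i _ ↦ mul_le_mul_of_nonneg_left
          (le_ciSup (Set.finite_range c).bddAbove i) (hw₀ i)
    _ = ⨆ i, c i := by rw [← Finset.sum_mul, hw₁, one_mul]

theorem le_sum_mul_of_mem_stdSimplex {ι : Type*} [Fintype ι] {w : ι → ℝ}
    (hw : w ∈ stdSimplex ℝ ι) {c : ℝ} {g : ι → ℝ} (hg : ∀ i, c ≤ g i) : c ≤ ∑ i, w i * g i :=
  calc c = ∑ i, w i * c := by rw [← Finset.sum_mul, hw.2, one_mul]
    _ ≤ ∑ i, w i * g i := Finset.sum_le_sum fun i _ ↦ mul_le_mul_of_nonneg_left (hg i) (hw.1 i)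

theorem iSup_stdSimplex_iInf_sum_mul_eq_iInf_iSup {ι E : Type*} [Fintype ι] [Nonempty ι]
    [TopologicalSpace E] [AddCommGroup E] [Module ℝ E] [IsTopologicalAddGroup E]
    [ContinuousSMul ℝ E] {h : ι → E → ℝ} (hcont : ∀ i, Continuous (h i))
    (hconv : ∀ i, ConvexOn ℝ univ (h i)) {c : ℝ} (hc : ∀ i x, c ≤ h i x) :
    ⨆ w : stdSimplex ℝ ι, ⨅ x, ∑ i, (w : ι → ℝ) i * h i x = ⨅ x, ⨆ i, h i x := by
  classical
  have hne : (stdSimplex ℝ ι).Nonempty := ⟨_, single_mem_stdSimplex ℝ (Classical.arbitrary ι)⟩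
  have := hne.to_subtype
  have hlow : ∀ w ∈ stdSimplex ℝ ι, ∀ x, c ≤ ∑ i, w i * h i x := fun w hw x ↦
    le_sum_mul_of_mem_stdSimplex hw (hc · x)
  -- Sion's theorem takes the infimum over the compact set, so it is applied in `ℝᵒᵈ`.
  refine toDual.injective (Sion.minimax (β := ℝᵒᵈ) (Y := univ)
    (f := fun w x ↦ toDual (∑ i, w i * h i x)) hne (isCompact_stdSimplex ℝ ι)
    (fun x _ ↦ ?_) (fun x _ ↦ ?_) convex_univ (fun w _ ↦ ?_) (fun w hw ↦ ?_)
    (convex_stdSimplex ℝ ι) (fun w ↦ toDual (⨅ x, ∑ i, w i * h i x)) (fun w hw ↦ ?_) _ ?_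
    (fun x ↦ toDual (⨆ i, h i x)) (fun x _ ↦ ?_) _ ?_)
  · exact (continuous_finsetSum _ fun i _ ↦ continuous_apply i |>.mul continuous_const
      ).upperSemicontinuous.upperSemicontinuousOn _
  · exact ((Fintype.linearCombination ℝ (h · x)).concaveOn (convex_stdSimplex ℝ ι)).quasiconcaveOn
  · exact (continuous_finsetSum _ fun i _ ↦ continuous_const.mul (hcont i)
      ).lowerSemicontinuous.lowerSemicontinuousOn _
  · exact (ConvexOn.sum_mul convex_univ hw.1 hconv).quasiconvexOn
  · have hglb := isGLB_ciInf ⟨c, forall_mem_range.2 (hlow w hw)⟩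
    rw [← image_univ] at hglb
    exact hglb.dual
  · refine (isLUB_ciSup_set ⟨⨆ i, h i 0, forall_mem_image.2 fun w hw ↦ ?_⟩ hne).dual
    exact (ciInf_le ⟨c, forall_mem_range.2 (hlow w hw)⟩ 0).trans
      ((isGreatest_sum_mul_stdSimplex (h · 0)).2 ⟨w, hw, rfl⟩)
  · exact (isGreatest_sum_mul_stdSimplex (h · x)).isLUB.dual
  · have hglb := isGLB_ciInf (f := fun x ↦ ⨆ i, h i x)
      ⟨c, forall_mem_range.2 fun x ↦ (hc (Classical.arbitrary ι) x).trans
        (le_ciSup (finite_range (h · x)).bddAbove _)⟩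
    rw [← image_univ] at hglb
    exact hglb.dual

theorem strong_duality_general
    (m n : ℕ) (hm : 0 < m)
    (f : Fin m → ℂ) (Ψ : Matrix (Fin m) (Fin n) ℂ)
    (q : ℝ) (hq : 1 ≤ q) :
    (⨆ w : {w : Fin m → ℝ // (∀ j, 0 ≤ w j) ∧ ∑ j, w j = 1},
        ⨅ a : Fin n → ℂ, ∑ j, (w : Fin m → ℝ) j * ‖f j - Ψ.mulVec a j‖ ^ q)
      = (⨅ a : Fin n → ℂ, ⨆ j, ‖f j - Ψ.mulVec a j‖) ^ q := by
  have : Nonempty (Fin m) := ⟨⟨0, hm⟩⟩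
  have hq₀ : 0 ≤ q := zero_le_one.trans hq
  calc _ = ⨅ a : Fin n → ℂ, ⨆ j, ‖f j - Ψ.mulVec a j‖ ^ q :=
        iSup_stdSimplex_iInf_sum_mul_eq_iInf_iSup
          (fun j ↦ Continuous.rpow_const (by fun_prop) fun _ ↦ Or.inr hq₀)
          (fun j ↦ (Ψ.convexOn_norm_sub_mulVec_apply f j).rpow (fun a _ ↦ norm_nonneg _) hq)
          (fun j a ↦ Real.rpow_nonneg (norm_nonneg _) q)
    _ = ⨅ a : Fin n → ℂ, (⨆ j, ‖f j - Ψ.mulVec a j‖) ^ q := by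
        simp only [Real.rpow_iSup_of_nonneg (fun _ ↦ norm_nonneg _) hq₀]
    _ = _ := (Real.rpow_iInf_of_nonneg (fun a ↦ Real.iSup_nonneg fun j ↦ norm_nonneg _) hq₀).symm

/-- Strong `L_q` duality (Theorem 2.1(1)): if `n + 1 ≤ m`, `Ψ` satisfies the discrete
Haar condition, `q ≥ 1` and `η* > 0`, then `sup_{w ∈ S} d_q(w) = (η*)^q`. -/
theorem strong_duality
    (m n : ℕ) (hm : 0 < m) (hn : 0 < n) (hnm : n + 1 ≤ m)
    (f : Fin m → ℂ) (Ψ : Matrix (Fin m) (Fin n) ℂ)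
    (hHaar : ∀ ρ : Fin n → Fin m, Function.Injective ρ →
      IsUnit (Matrix.of fun i j => Ψ (ρ i) j : Matrix (Fin n) (Fin n) ℂ))
    (q : ℝ) (hq : 1 ≤ q)
    (hη : 0 < ⨅ a : Fin n → ℂ, ⨆ j, ‖f j - Ψ.mulVec a j‖) :
    (⨆ w : {w : Fin m → ℝ // (∀ j, 0 ≤ w j) ∧ ∑ j, w j = 1},
        ⨅ a : Fin n → ℂ, ∑ j, (w : Fin m → ℝ) j * ‖f j - Ψ.mulVec a j‖ ^ q)
      = (⨅ a : Fin n → ℂ, ⨆ j, ‖f j - Ψ.mulVec a j‖) ^ q :=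
  strong_duality_general m n hm f Ψ q hq
end

section
/- (Complementary slackness, Theorem 2.1(1)) Assume n + 1 ≤ m, Ψ satisfies the discrete Haar condition, q ≥ 1, and η* > 0. Let a* ∈ ℂ^n attain the minimax value, i.e. max_{1≤j≤m} |f_j − (Ψ a*)_j| = η*, and let w* ∈ S attain sup_{w ∈ S} d_q(w). Then for every j = 1,…,m one has w*_j · (η* − |f_j − (Ψ a*)_j|) = 0. -/
/-!
Write `r = f - Ψ a*` and `η* = ‖r‖∞`. Minimality of `a*` means that no direction `d` decreases all
active residuals `|r_j| = η*` at once, i.e. there is no `d` with `Re(conj r_j (Ψ d)_j) > 0` on the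
active set. By Gordan's alternative (Hahn–Banach separation of `0` from the image of a face of the
simplex) there are weights `w ∈ S` supported on the active set with `∑_j w_j conj(r_j) Ψ_j = 0`.
Pairing any residual `f - Ψ a` with `w · conj r` then gives `η* ≤ ∑_j w_j |f_j - (Ψ a)_j|`, so
`η*^q ≤ d_q(w)` by the power mean inequality. Hence
`η*^q ≤ d_q(w) ≤ d_q(w*) ≤ ∑_j w*_j |r_j|^q ≤ η*^q`, and equality forces `w*_j = 0` wherever
`|r_j| < η*`.
-/

open Filter Topology Matrix

theorem iSup_norm_apply_eq_norm {ι : Type*} [Fintype ι] {E : ι → Type*}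
    [∀ i, SeminormedAddGroup (E i)] (x : ∀ i, E i) : ⨆ i, ‖x i‖ = ‖x‖ :=
  le_antisymm (Real.iSup_le (norm_le_pi_norm x) (norm_nonneg x))
    ((pi_norm_le_iff_of_nonneg (Real.iSup_nonneg fun _ => norm_nonneg _)).2
      fun i => le_ciSup (f := fun i => ‖x i‖) (Finite.bddAbove_range _) i)

theorem mul_sub_eq_zero_of_le_sum {ι : Type*} [Fintype ι] {w x : ι → ℝ} {c : ℝ}
    (hw : w ∈ stdSimplex ℝ ι) (hx : ∀ j, x j ≤ c) (hc : c ≤ ∑ j, w j * x j) (j : ι) :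
    w j * (c - x j) = 0 := by
  have hnonneg : ∀ j ∈ Finset.univ, 0 ≤ w j * (c - x j) :=
    fun j _ => mul_nonneg (hw.1 j) (sub_nonneg.2 (hx j))
  have hsum : ∑ j, w j * (c - x j) = 0 := by
    refine le_antisymm ?_ (Finset.sum_nonneg hnonneg)
    simp only [mul_sub, Finset.sum_sub_distrib, ← Finset.sum_mul, hw.2, one_mul]
    linarith
  exact (Finset.sum_eq_zero_iff_of_nonneg hnonneg).1 hsum j (Finset.mem_univ j)

section Descent

variable {F : Type*} [NormedAddCommGroup F] [InnerProductSpace ℝ F]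

theorem eventually_norm_sub_smul_lt_norm {x y : F} (h : 0 < inner ℝ x y) :
    ∀ᶠ t in 𝓝[>] (0 : ℝ), ‖x - t • y‖ < ‖x‖ := by
  filter_upwards [Ioo_mem_nhdsGT (show (0 : ℝ) < 2 * inner ℝ x y / (‖y‖ ^ 2 + 1) by positivity)]
    with t ⟨ht0, ht⟩
  rw [lt_div_iff₀ (by positivity)] at ht
  have hsq : ‖x - t • y‖ ^ 2 = ‖x‖ ^ 2 - t * (2 * inner ℝ x y - t * ‖y‖ ^ 2) := by
    rw [norm_sub_sq_real, inner_smul_right, norm_smul, Real.norm_of_nonneg ht0.le]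
    ring
  refine lt_of_pow_lt_pow_left₀ 2 (norm_nonneg x) ?_
  rw [hsq]
  nlinarith

theorem eventually_pi_norm_sub_smul_lt_norm {ι : Type*} [Fintype ι] {r g : ι → F}
    (hr : 0 < ‖r‖) (h : ∀ j, ‖r j‖ = ‖r‖ → 0 < inner ℝ (r j) (g j)) :
    ∀ᶠ t in 𝓝[>] (0 : ℝ), ‖r - t • g‖ < ‖r‖ := by
  have hcoord : ∀ j, ∀ᶠ t in 𝓝[>] (0 : ℝ), ‖r j - t • g j‖ < ‖r‖ := fun j => by
    rcases (norm_le_pi_norm r j).lt_or_eq with hlt | heq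
    · have hcont : Continuous fun t : ℝ => ‖r j - t • g j‖ := by fun_prop
      exact (hcont.tendsto' 0 _ (by simp)).mono_left nhdsWithin_le_nhds |>.eventually_lt_const hlt
    · exact heq ▸ eventually_norm_sub_smul_lt_norm (h j heq)
  filter_upwards [eventually_all.2 hcoord] with t ht
  exact (pi_norm_lt_iff hr).2 ht

end Descent

section Gordan

variable {𝕜 ι κ : Type*} [RCLike 𝕜] [Fintype ι] [Fintype κ]

theorem exists_mem_stdSimplex_sum_smul_eq_zero {p : ι → Prop} (v : ι → κ → 𝕜)
    (h : ∀ d : κ → 𝕜, ∃ i, p i ∧ RCLike.re (v i ⬝ᵥ d) ≤ 0) :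
    ∃ w ∈ stdSimplex ℝ ι, (∀ i, ¬ p i → w i = 0) ∧ ∑ i, w i • v i = 0 := by
  classical
  set face : Set (ι → ℝ) := stdSimplex ℝ ι ∩ ⋂ i, ⋂ (_ : ¬ p i), {w | w i = 0}
  have hconv : Convex ℝ face :=
    (convex_stdSimplex ℝ ι).inter (convex_iInter fun i => convex_iInter fun _ =>
      convex_hyperplane (LinearMap.proj (R := ℝ) (φ := fun _ : ι => ℝ) i).isLinear 0)
  have hcompact : IsCompact face :=
    (isCompact_stdSimplex ℝ ι).inter_right <| isClosed_iInter fun i =>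
      isClosed_iInter fun _ => isClosed_eq (continuous_apply i) continuous_const
  set T := Fintype.linearCombination ℝ v
  by_contra! hno
  have h0 : (0 : κ → 𝕜) ∉ T '' face := by
    rintro ⟨w, ⟨hw, hwp⟩, hT⟩
    simp only [Set.mem_iInter] at hwp
    exact hno w hw hwp (by rwa [Fintype.linearCombination_apply] at hT)
  obtain ⟨φ, u, hφ0, hφ⟩ := RCLike.geometric_hahn_banach_point_closed (𝕜 := 𝕜)
    (hconv.linear_image T) (hcompact.image T.continuous_of_finiteDimensional).isClosed h0
  set d : κ → 𝕜 := fun k => φ fun j => if k = j then 1 else 0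
  have hrep : ∀ x, φ x = x ⬝ᵥ d := fun x => by
    conv_lhs => rw [pi_eq_sum_univ x]
    simp only [map_sum, map_smul, smul_eq_mul, dotProduct, d]
  obtain ⟨i, hi, hre⟩ := h d
  have hface : Pi.single i 1 ∈ face := by
    refine ⟨single_mem_stdSimplex ℝ i, Set.mem_iInter₂.2 fun j hj => ?_⟩
    exact Pi.single_eq_of_ne (by rintro rfl; exact hj hi) _
  have hvi : v i ∈ T '' face := ⟨Pi.single i 1, hface, by simp [T]⟩
  rw [map_zero, map_zero] at hφ0
  linarith [hφ _ hvi, hrep (v i) ▸ hre]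

end Gordan

section Chebyshev

variable {ι κ : Type*} [Fintype ι] [Fintype κ] {f : ι → ℂ} {Ψ : Matrix ι κ ℂ} {a : κ → ℂ}

theorem exists_mem_stdSimplex_vecMul_eq_zero (hmin : ∀ b, ‖f - Ψ *ᵥ a‖ ≤ ‖f - Ψ *ᵥ b‖)
    (hpos : 0 < ‖f - Ψ *ᵥ a‖) :
    ∃ w ∈ stdSimplex ℝ ι, (∀ j, w j ≠ 0 → ‖(f - Ψ *ᵥ a) j‖ = ‖f - Ψ *ᵥ a‖) ∧
      (fun j => (w j : ℂ) * star ((f - Ψ *ᵥ a) j)) ᵥ* Ψ = 0 := by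
  set r := f - Ψ *ᵥ a
  have hdot : ∀ j d, (star (r j) • Ψ j) ⬝ᵥ d = star (r j) * (Ψ *ᵥ d) j := fun j d => by
    rw [smul_dotProduct, smul_eq_mul]; rfl
  have hno_descent : ∀ d, ∃ j, ‖r j‖ = ‖r‖ ∧ RCLike.re ((star (r j) • Ψ j) ⬝ᵥ d) ≤ 0 := by
    intro d
    by_contra! hd
    obtain ⟨t, ht⟩ := (eventually_pi_norm_sub_smul_lt_norm hpos (g := Ψ *ᵥ d)
      fun j hj => by rw [Complex.inner, mul_comm, ← Complex.star_def, ← hdot]; exact hd j hj).exists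
    have hshift : f - Ψ *ᵥ (a + t • d) = r - t • Ψ *ᵥ d := by
      rw [mulVec_add, mulVec_smul, sub_add_eq_sub_sub]
    exact (hmin (a + t • d)).not_gt (hshift ▸ ht)
  obtain ⟨w, hw, hsupp, hsum⟩ := exists_mem_stdSimplex_sum_smul_eq_zero _ hno_descent
  refine ⟨w, hw, fun j => not_imp_comm.1 (hsupp j), ?_⟩
  ext k
  simpa [vecMul, dotProduct, Finset.sum_apply, mul_assoc, Complex.real_smul] using congrFun hsum k

theorem norm_le_sum_mul_norm_sub_mulVec {w : ι → ℝ} (hw : w ∈ stdSimplex ℝ ι)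
    (hsupp : ∀ j, w j ≠ 0 → ‖(f - Ψ *ᵥ a) j‖ = ‖f - Ψ *ᵥ a‖)
    (hc : (fun j => (w j : ℂ) * star ((f - Ψ *ᵥ a) j)) ᵥ* Ψ = 0) (b : κ → ℂ) :
    ‖f - Ψ *ᵥ a‖ ≤ ∑ j, w j * ‖(f - Ψ *ᵥ b) j‖ := by
  set r := f - Ψ *ᵥ a
  set c : ι → ℂ := fun j => (w j : ℂ) * star (r j)
  set z := f - Ψ *ᵥ b
  have hcr_term : ∀ j, c j * r j = ((w j * ‖r‖ ^ 2 : ℝ) : ℂ) := fun j => by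
    rcases eq_or_ne (w j) 0 with h | h
    · simp [c, h]
    · simp [c, mul_assoc, Complex.conj_mul', hsupp j h]
  have hc_norm : ∀ j, ‖c j‖ = w j * ‖r‖ := fun j => by
    rcases eq_or_ne (w j) 0 with h | h
    · simp [c, h]
    · simp [c, hsupp j h, abs_of_nonneg (hw.1 j)]
  have hcz : c ⬝ᵥ z = ((‖r‖ ^ 2 : ℝ) : ℂ) := by
    have hinv : c ⬝ᵥ z = c ⬝ᵥ r := by
      simp only [z, r, dotProduct_sub, dotProduct_mulVec, hc, zero_dotProduct]
    rw [hinv, dotProduct, Finset.sum_congr rfl fun j _ => hcr_term j, ← Complex.ofReal_sum,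
      ← Finset.sum_mul, hw.2, one_mul]
  have hbound : ‖r‖ ^ 2 ≤ ‖r‖ * ∑ j, w j * ‖z j‖ :=
    calc ‖r‖ ^ 2 = ‖c ⬝ᵥ z‖ := by
          rw [hcz, Complex.norm_real, Real.norm_of_nonneg (by positivity)]
      _ ≤ ∑ j, ‖c j‖ * ‖z j‖ := (norm_sum_le _ _).trans_eq (by simp only [norm_mul])
      _ = ‖r‖ * ∑ j, w j * ‖z j‖ := by
        simp only [hc_norm, Finset.mul_sum]; exact Finset.sum_congr rfl fun j _ => by ring
  have hS : 0 ≤ ∑ j, w j * ‖z j‖ :=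
    Finset.sum_nonneg fun j _ => mul_nonneg (hw.1 j) (norm_nonneg _)
  nlinarith [norm_nonneg r]

end Chebyshev

theorem complementary_slackness_general
    (m n : ℕ)
    (f : Fin m → ℂ) (Ψ : Matrix (Fin m) (Fin n) ℂ)
    (q : ℝ) (hq : 1 ≤ q)
    (hη : 0 < ⨅ a : Fin n → ℂ, ⨆ j, ‖f j - Ψ.mulVec a j‖)
    (astar : Fin n → ℂ)
    (hastar : (⨆ j, ‖f j - Ψ.mulVec astar j‖)
      = ⨅ a : Fin n → ℂ, ⨆ j, ‖f j - Ψ.mulVec a j‖)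
    (wstar : Fin m → ℝ) (hwstar0 : ∀ j, 0 ≤ wstar j) (hwstar1 : ∑ j, wstar j = 1)
    (hwstarMax : ∀ w : Fin m → ℝ, (∀ j, 0 ≤ w j) → ∑ j, w j = 1 →
      (⨅ a : Fin n → ℂ, ∑ j, w j * ‖f j - Ψ.mulVec a j‖ ^ q)
        ≤ ⨅ a : Fin n → ℂ, ∑ j, wstar j * ‖f j - Ψ.mulVec a j‖ ^ q) :
    ∀ j, wstar j *
      ((⨅ a : Fin n → ℂ, ⨆ j', ‖f j' - Ψ.mulVec a j'‖)
        - ‖f j - Ψ.mulVec astar j‖) = 0 := by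
  have hsup : ∀ a, ⨆ j, ‖f j - Ψ.mulVec a j‖ = ‖f - Ψ *ᵥ a‖ := fun a =>
    iSup_norm_apply_eq_norm (f - Ψ *ᵥ a)
  simp only [hsup] at hη hastar ⊢
  rw [← hastar] at hη ⊢
  set r := f - Ψ *ᵥ astar
  have hmin : ∀ a, ‖r‖ ≤ ‖f - Ψ *ᵥ a‖ :=
    hastar ▸ ciInf_le ⟨0, by rintro _ ⟨a, rfl⟩; exact norm_nonneg _⟩
  have hq0 : 0 ≤ q := by linarith
  obtain ⟨w, hw, hsupp, hc⟩ := exists_mem_stdSimplex_vecMul_eq_zero hmin hη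
  have hdual : ‖r‖ ^ q ≤ ⨅ a, ∑ j, w j * ‖f j - Ψ.mulVec a j‖ ^ q := le_ciInf fun a =>
    (Real.rpow_le_rpow (norm_nonneg r) (norm_le_sum_mul_norm_sub_mulVec hw hsupp hc a) hq0).trans
      (Real.rpow_arith_mean_le_arith_mean_rpow _ _ _ (fun j _ => hw.1 j) hw.2
        (fun j _ => norm_nonneg _) hq)
  have hprimal : ⨅ a, ∑ j, wstar j * ‖f j - Ψ.mulVec a j‖ ^ q ≤ ∑ j, wstar j * ‖r j‖ ^ q :=
    ciInf_le ⟨0, by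
      rintro _ ⟨a, rfl⟩; exact Finset.sum_nonneg fun j _ => mul_nonneg (hwstar0 j) (by positivity)⟩
      astar
  intro j
  rcases mul_eq_zero.1 (mul_sub_eq_zero_of_le_sum ⟨hwstar0, hwstar1⟩
    (fun j => Real.rpow_le_rpow (norm_nonneg _) (norm_le_pi_norm r j) hq0)
    ((hdual.trans (hwstarMax w hw.1 hw.2)).trans hprimal) j) with h | h
  · rw [h, zero_mul]
  · rw [sub_eq_zero, Real.rpow_left_inj (norm_nonneg _) (norm_nonneg _) (by linarith)] at h
    rw [h]
    exact mul_eq_zero_of_right _ (sub_self _)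

/-- Complementary slackness (Theorem 2.1(1)): if `a*` attains the minimax value `η*` and
`w* ∈ S` maximizes `d_q` over the simplex `S`, then `w*_j (η* − |f_j − (Ψ a*)_j|) = 0`
for every `j`. -/
theorem complementary_slackness
    (m n : ℕ) (hm : 0 < m) (hn : 0 < n) (hnm : n + 1 ≤ m)
    (f : Fin m → ℂ) (Ψ : Matrix (Fin m) (Fin n) ℂ)
    (hHaar : ∀ ρ : Fin n → Fin m, Function.Injective ρ →
      IsUnit (Matrix.of fun i j => Ψ (ρ i) j : Matrix (Fin n) (Fin n) ℂ))
    (q : ℝ) (hq : 1 ≤ q)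
    (hη : 0 < ⨅ a : Fin n → ℂ, ⨆ j, ‖f j - Ψ.mulVec a j‖)
    (astar : Fin n → ℂ)
    (hastar : (⨆ j, ‖f j - Ψ.mulVec astar j‖)
      = ⨅ a : Fin n → ℂ, ⨆ j, ‖f j - Ψ.mulVec a j‖)
    (wstar : Fin m → ℝ) (hwstar0 : ∀ j, 0 ≤ wstar j) (hwstar1 : ∑ j, wstar j = 1)
    (hwstarMax : ∀ w : Fin m → ℝ, (∀ j, 0 ≤ w j) → ∑ j, w j = 1 →
      (⨅ a : Fin n → ℂ, ∑ j, w j * ‖f j - Ψ.mulVec a j‖ ^ q)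
        ≤ ⨅ a : Fin n → ℂ, ∑ j, wstar j * ‖f j - Ψ.mulVec a j‖ ^ q) :
    ∀ j, wstar j *
      ((⨅ a : Fin n → ℂ, ⨆ j', ‖f j' - Ψ.mulVec a j'‖)
        - ‖f j - Ψ.mulVec astar j‖) = 0 :=
  complementary_slackness_general m n f Ψ q hq hη astar hastar wstar hwstar0 hwstar1 hwstarMax
end

section
/- (Support of dual maximizers, Theorem 2.1(1)) Assume n + 1 ≤ m, Ψ satisfies the discrete Haar condition, q ≥ 1, and η* > 0. Then every maximizer w* ∈ S of d_q over S has at least n + 1 nonzero entries. -/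
/-!
If a maximizer `w*` were supported on at most `n` rows, the Haar condition would let some
`a` interpolate `f` exactly on that support, so `d_q(w*) = 0`. But the uniform weights give
`d_q(1/m, …, 1/m) ≥ (η*)^q / m > 0`, since every `a` has a residual of size at least `η*`
in some row; this contradicts the maximality of `w*`.
-/

open Function Matrix

section Interpolation

variable {ι : Type*} [Fintype ι] {n : ℕ}

theorem exists_injective_fin_subset_range {S : Set ι} (hS : S.ncard ≤ n)
    (hn : n ≤ Fintype.card ι) : ∃ ρ : Fin n → ι, Injective ρ ∧ S ⊆ Set.range ρ := by
  classical
  obtain ⟨t, hSt, ht⟩ := Finset.exists_superset_card_eq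
    (s := S.toFinset) (by rwa [← Set.ncard_eq_toFinset_card']) hn
  let e := t.equivFinOfCardEq ht
  refine ⟨fun i => (e.symm i : ι), fun i j h => e.symm.injective (Subtype.ext h), ?_⟩
  intro j hj
  have hjt : j ∈ t := hSt (Set.mem_toFinset.mpr hj)
  exact ⟨e ⟨j, hjt⟩, by simp⟩

theorem exists_mulVec_eq_on_of_haar {K : Type*} [Field K] (Ψ : Matrix ι (Fin n) K)
    (hHaar : ∀ ρ : Fin n → ι, Injective ρ →
      IsUnit (Matrix.of fun i j => Ψ (ρ i) j : Matrix (Fin n) (Fin n) K))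
    (f : ι → K) {S : Set ι} (hS : S.ncard ≤ n) (hn : n ≤ Fintype.card ι) :
    ∃ a : Fin n → K, ∀ j ∈ S, (Ψ *ᵥ a) j = f j := by
  obtain ⟨ρ, hρ, hSρ⟩ := exists_injective_fin_subset_range hS hn
  obtain ⟨a, ha⟩ := mulVec_surjective_iff_isUnit.mpr (hHaar ρ hρ) (f ∘ ρ)
  refine ⟨a, ?_⟩
  rintro _ hj
  obtain ⟨i, rfl⟩ := hSρ hj
  exact congrFun ha i

end Interpolation

section DualObjective

variable {𝕜 ι κ : Type*} [NormedRing 𝕜] [Fintype ι] [Fintype κ]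

noncomputable def dualObjective (f : ι → 𝕜) (Ψ : Matrix ι κ 𝕜) (q : ℝ) (w : ι → ℝ) : ℝ :=
  ⨅ a : κ → 𝕜, ∑ j, w j * ‖f j - (Ψ *ᵥ a) j‖ ^ q

variable {f : ι → 𝕜} {Ψ : Matrix ι κ 𝕜} {q : ℝ} {w : ι → ℝ}

theorem bddBelow_range_weighted_residual (hw : ∀ j, 0 ≤ w j) :
    BddBelow (Set.range fun a : κ → 𝕜 => ∑ j, w j * ‖f j - (Ψ *ᵥ a) j‖ ^ q) := by
  refine ⟨0, ?_⟩
  rintro _ ⟨a, rfl⟩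
  exact Finset.sum_nonneg fun j _ => mul_nonneg (hw j) (Real.rpow_nonneg (norm_nonneg _) q)

theorem dualObjective_nonpos_of_eq_on_support (hq : q ≠ 0) (hw : ∀ j, 0 ≤ w j)
    (a : κ → 𝕜) (ha : ∀ j ∈ {j | w j ≠ 0}, (Ψ *ᵥ a) j = f j) :
    dualObjective f Ψ q w ≤ 0 := by
  refine (ciInf_le (bddBelow_range_weighted_residual hw) a).trans_eq ?_
  refine Finset.sum_eq_zero fun j _ => ?_
  by_cases hj : w j = 0
  · simp [hj]
  · simp [ha j hj, Real.zero_rpow hq]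

theorem mul_rpow_minimax_le_dualObjective [Nonempty ι] (hq : 0 ≤ q) {c : ℝ} (hc : 0 ≤ c)
    (hcw : ∀ j, c ≤ w j) :
    c * (⨅ a : κ → 𝕜, ⨆ j, ‖f j - (Ψ *ᵥ a) j‖) ^ q ≤ dualObjective f Ψ q w := by
  set η := ⨅ a : κ → 𝕜, ⨆ j, ‖f j - (Ψ *ᵥ a) j‖
  have hη : 0 ≤ η := Real.iInf_nonneg fun a => Real.iSup_nonneg fun j => norm_nonneg _
  refine le_ciInf fun a => ?_
  obtain ⟨j₀, hj₀⟩ := Finite.exists_max fun j => ‖f j - (Ψ *ᵥ a) j‖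
  have hηj₀ : η ≤ ‖f j₀ - (Ψ *ᵥ a) j₀‖ :=
    (ciInf_le ⟨0, by rintro _ ⟨b, rfl⟩; exact Real.iSup_nonneg fun j => norm_nonneg _⟩ a).trans
      (ciSup_le hj₀)
  have hw : ∀ j, 0 ≤ w j := fun j => hc.trans (hcw j)
  calc c * η ^ q ≤ w j₀ * ‖f j₀ - (Ψ *ᵥ a) j₀‖ ^ q :=
        mul_le_mul (hcw j₀) (Real.rpow_le_rpow hη hηj₀ hq) (Real.rpow_nonneg hη q) (hw j₀)
    _ ≤ ∑ j, w j * ‖f j - (Ψ *ᵥ a) j‖ ^ q :=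
        Finset.single_le_sum (f := fun j => w j * ‖f j - (Ψ *ᵥ a) j‖ ^ q)
          (fun j _ => mul_nonneg (hw j) (Real.rpow_nonneg (norm_nonneg _) q))
          (Finset.mem_univ j₀)

end DualObjective

theorem dual_maximizer_support_general
    (m n : ℕ) (hnm : n + 1 ≤ m)
    (f : Fin m → ℂ) (Ψ : Matrix (Fin m) (Fin n) ℂ)
    (hHaar : ∀ ρ : Fin n → Fin m, Function.Injective ρ →
      IsUnit (Matrix.of fun i j => Ψ (ρ i) j : Matrix (Fin n) (Fin n) ℂ))
    (q : ℝ) (hq : 1 ≤ q)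
    (hη : 0 < ⨅ a : Fin n → ℂ, ⨆ j, ‖f j - Ψ.mulVec a j‖)
    (wstar : Fin m → ℝ) (hwstar0 : ∀ j, 0 ≤ wstar j)
    (hwstarMax : ∀ w : Fin m → ℝ, (∀ j, 0 ≤ w j) → ∑ j, w j = 1 →
      (⨅ a : Fin n → ℂ, ∑ j, w j * ‖f j - Ψ.mulVec a j‖ ^ q)
        ≤ ⨅ a : Fin n → ℂ, ∑ j, wstar j * ‖f j - Ψ.mulVec a j‖ ^ q) :
    n + 1 ≤ {j : Fin m | wstar j ≠ 0}.ncard := by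
  by_contra! hcard
  obtain ⟨a, ha⟩ := exists_mulVec_eq_on_of_haar Ψ hHaar f (Nat.lt_succ_iff.mp hcard)
    (by simpa using Nat.le_of_succ_le hnm)
  have hstar : dualObjective f Ψ q wstar ≤ 0 :=
    dualObjective_nonpos_of_eq_on_support (by linarith) hwstar0 a ha
  have : Nonempty (Fin m) := ⟨⟨0, by omega⟩⟩
  have hm : (0 : ℝ) < m := by exact_mod_cast (by omega : 0 < m)
  have huniform : 0 < dualObjective f Ψ q fun _ => 1 / (m : ℝ) :=
    (mul_pos (by positivity) (Real.rpow_pos_of_pos hη q)).trans_le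
      (mul_rpow_minimax_le_dualObjective (by linarith) (by positivity) fun _ => le_rfl)
  have hmax := hwstarMax (fun _ => 1 / (m : ℝ)) (fun _ => by positivity)
    (by simp [hm.ne'])
  exact (huniform.trans_le (hmax.trans hstar)).false

/-- Support of dual maximizers (Theorem 2.1(1)): under the hypotheses `n + 1 ≤ m`,
the discrete Haar condition, `q ≥ 1` and `η* > 0`, every maximizer `w* ∈ S` of `d_q`
over `S` has at least `n + 1` nonzero entries. -/
theorem dual_maximizer_support
    (m n : ℕ) (hm : 0 < m) (hn : 0 < n) (hnm : n + 1 ≤ m)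
    (f : Fin m → ℂ) (Ψ : Matrix (Fin m) (Fin n) ℂ)
    (hHaar : ∀ ρ : Fin n → Fin m, Function.Injective ρ →
      IsUnit (Matrix.of fun i j => Ψ (ρ i) j : Matrix (Fin n) (Fin n) ℂ))
    (q : ℝ) (hq : 1 ≤ q)
    (hη : 0 < ⨅ a : Fin n → ℂ, ⨆ j, ‖f j - Ψ.mulVec a j‖)
    (wstar : Fin m → ℝ) (hwstar0 : ∀ j, 0 ≤ wstar j) (hwstar1 : ∑ j, wstar j = 1)
    (hwstarMax : ∀ w : Fin m → ℝ, (∀ j, 0 ≤ w j) → ∑ j, w j = 1 →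
      (⨅ a : Fin n → ℂ, ∑ j, w j * ‖f j - Ψ.mulVec a j‖ ^ q)
        ≤ ⨅ a : Fin n → ℂ, ∑ j, wstar j * ‖f j - Ψ.mulVec a j‖ ^ q) :
    n + 1 ≤ {j : Fin m | wstar j ≠ 0}.ncard :=
  dual_maximizer_support_general m n hnm f Ψ hHaar q hq hη wstar hwstar0 hwstarMax
end

section
/- (Theorem 2.1(2)) Assume n + 1 ≤ m, Ψ satisfies the discrete Haar condition, q > 1, and η* > 0. Let a* ∈ ℂ^n attain the minimax value, i.e. max_{1≤j≤m} |f_j − (Ψ a*)_j| = η*, and let w* ∈ S attain sup_{w ∈ S} d_q(w). Then a* is the unique minimizer over ℂ^n of the weighted problem a ↦ ∑_{j=1}^m w*_j |f_j − (Ψ a)_j|^q, and the minimum value equals d_q(w*) = (η*)^q. -/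
/-!
By Sion's minimax theorem over the compact simplex, the maximal dual value `d_q(w*)` equals
`min_a max_j |r_j(a)|^q = (η*)^q`, where `r(a) = f - Ψ a`; since a weighted mean is at most the
maximum, `a*` then minimizes the `w*`-weighted problem. Because `η* > 0`, the support of `w*` has
at least `n` points: otherwise the Haar condition would let `Ψ a` interpolate `f` on it and the
weighted objective would vanish. Two minimizers have equal residuals on the support, by strict
convexity of `z ↦ |z|^q` on `ℂ` for `q > 1`, hence coincide by the Haar condition.
-/

open Set Matrix

section NormRpow

variable {E : Type*} [NormedAddCommGroup E] [NormedSpace ℝ E] {q : ℝ}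

theorem convexOn_norm_rpow (hq : 1 ≤ q) : ConvexOn ℝ univ fun x : E => ‖x‖ ^ q := by
  refine ⟨convex_univ, fun x _ y _ a b ha hb hab => ?_⟩
  calc ‖a • x + b • y‖ ^ q ≤ (a • ‖x‖ + b • ‖y‖) ^ q :=
        Real.rpow_le_rpow (norm_nonneg _)
          ((convexOn_norm convex_univ).2 trivial trivial ha hb hab) (by linarith)
    _ ≤ a • ‖x‖ ^ q + b • ‖y‖ ^ q :=
        (convexOn_rpow hq).2 (norm_nonneg x) (norm_nonneg y) ha hb hab

theorem strictConvexOn_norm_rpow [StrictConvexSpace ℝ E] (hq : 1 < q) :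
    StrictConvexOn ℝ univ fun x : E => ‖x‖ ^ q := by
  refine ⟨convex_univ, fun x _ y _ hxy a b ha hb hab => ?_⟩
  rcases eq_or_ne ‖x‖ ‖y‖ with hnorm | hnorm
  · have hlt : ‖a • x + b • y‖ < ‖x‖ := norm_combo_lt_of_ne le_rfl hnorm.ge hxy ha hb hab
    calc ‖a • x + b • y‖ ^ q < ‖x‖ ^ q := Real.rpow_lt_rpow (norm_nonneg _) hlt (by linarith)
      _ = a • ‖x‖ ^ q + b • ‖y‖ ^ q := by
        rw [← hnorm, smul_eq_mul, smul_eq_mul, ← add_mul, hab, one_mul]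
  · calc ‖a • x + b • y‖ ^ q ≤ (a • ‖x‖ + b • ‖y‖) ^ q :=
          Real.rpow_le_rpow (norm_nonneg _)
            ((convexOn_norm convex_univ).2 trivial trivial ha.le hb.le hab) (by linarith)
      _ < a • ‖x‖ ^ q + b • ‖y‖ ^ q :=
          (strictConvexOn_rpow hq).2 (norm_nonneg x) (norm_nonneg y) hnorm ha hb hab

end NormRpow

theorem convexOn_sum_mul {V ι : Type*} [AddCommGroup V] [Module ℝ V] [Fintype ι]
    {s : Set V} {w : ι → ℝ} {g : ι → V → ℝ} (hs : Convex ℝ s) (hw : 0 ≤ w)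
    (hg : ∀ j, ConvexOn ℝ s (g j)) : ConvexOn ℝ s fun x => ∑ j, w j * g j x := by
  refine ⟨hs, fun x hx y hy a b ha hb hab => ?_⟩
  calc ∑ j, w j * g j (a • x + b • y) ≤ ∑ j, w j * (a • g j x + b • g j y) :=
        Finset.sum_le_sum fun j _ => mul_le_mul_of_nonneg_left ((hg j).2 hx hy ha hb hab) (hw j)
    _ = a • ∑ j, w j * g j x + b • ∑ j, w j * g j y := by
        simp only [smul_eq_mul, Finset.mul_sum, ← Finset.sum_add_distrib]
        exact Finset.sum_congr rfl fun j _ => by ring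

theorem sum_mul_le_ciSup_of_mem_stdSimplex {ι : Type*} [Fintype ι] {w : ι → ℝ}
    (hw : w ∈ stdSimplex ℝ ι) (c : ι → ℝ) : ∑ j, w j * c j ≤ ⨆ j, c j :=
  calc ∑ j, w j * c j ≤ ∑ j, w j * ⨆ k, c k :=
        Finset.sum_le_sum fun j _ =>
          mul_le_mul_of_nonneg_left (le_ciSup (Finite.bddAbove_range c) j) (hw.1 j)
    _ = ⨆ k, c k := by rw [← Finset.sum_mul, hw.2, one_mul]

theorem ciSup_rpow {ι : Type*} [Finite ι] [Nonempty ι] {x : ι → ℝ} (hx : 0 ≤ x) {q : ℝ}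
    (hq : 0 ≤ q) : (⨆ j, x j ^ q) = (⨆ j, x j) ^ q := by
  obtain ⟨j₀, hj₀⟩ := exists_eq_ciSup_of_finite (f := x)
  rw [← hj₀]
  refine le_antisymm (ciSup_le fun j => Real.rpow_le_rpow (hx j) ?_ hq)
    (le_ciSup (Finite.bddAbove_range fun j => x j ^ q) j₀)
  exact hj₀ ▸ le_ciSup (Finite.bddAbove_range x) j

theorem iInf_sum_mul_eq_ciSup_of_isMaxOn {V ι : Type*} [Fintype ι] [Nonempty ι]
    [AddCommGroup V] [Module ℝ V] [TopologicalSpace V] [IsTopologicalAddGroup V]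
    [ContinuousSMul ℝ V] {g : ι → V → ℝ} (hcont : ∀ j, Continuous (g j))
    (hconv : ∀ j, ConvexOn ℝ univ (g j)) (hnonneg : ∀ j x, 0 ≤ g j x) {x₀ : V}
    (hx₀ : IsMinOn (fun x => ⨆ j, g j x) univ x₀) {w₀ : ι → ℝ} (hw₀ : w₀ ∈ stdSimplex ℝ ι)
    (hmax : IsMaxOn (fun w => ⨅ x, ∑ j, w j * g j x) (stdSimplex ℝ ι) w₀) :
    (⨅ x, ∑ j, w₀ j * g j x) = ⨆ j, g j x₀ := by
  classical
  have hbdd : ∀ w ∈ stdSimplex ℝ ι, BddBelow (range fun x => ∑ j, w j * g j x) :=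
    fun w hw => ⟨0, forall_mem_range.2 fun x =>
      Finset.sum_nonneg fun j _ => mul_nonneg (hw.1 j) (hnonneg j x)⟩
  have hlinear : ∀ x, ConvexOn ℝ (stdSimplex ℝ ι) fun w => -∑ j, w j * g j x :=
    fun x => ⟨convex_stdSimplex ℝ ι, fun w₁ _ w₂ _ a b _ _ _ => le_of_eq <| by
      simp only [Pi.add_apply, Pi.smul_apply, smul_eq_mul, add_mul, Finset.sum_add_distrib,
        mul_neg, Finset.mul_sum, mul_assoc]
      ring⟩
  -- Sion's theorem needs compactness on the side of the infimum, hence the sign change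
  have := Sion.minimax (X := stdSimplex ℝ ι) (Y := univ) (f := fun w x => -∑ j, w j * g j x)
    (ne_X := ⟨_, single_mem_stdSimplex ℝ (Classical.arbitrary ι)⟩)
    (kX := isCompact_stdSimplex ℝ ι)
    (hfy := fun x _ => (by fun_prop : Continuous _).lowerSemicontinuous.lowerSemicontinuousOn _)
    (hfy' := fun x _ => (hlinear x).quasiconvexOn)
    (cY := convex_univ)
    (hfx := fun w _ => (by fun_prop : Continuous _).upperSemicontinuous.upperSemicontinuousOn _)
    (hfx' := fun w hw => (convexOn_sum_mul convex_univ hw.1 hconv).neg.quasiconcaveOn)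
    (cX := convex_stdSimplex ℝ ι)
    (sup_y := fun w => -⨅ x, ∑ j, w j * g j x)
    (hsup_y := fun w hw => ⟨by rintro _ ⟨x, -, rfl⟩; exact neg_le_neg (ciInf_le (hbdd w hw) x),
      fun b hb => neg_le.1 (le_ciInf fun x => neg_le.1 (hb ⟨x, trivial, rfl⟩))⟩)
    (inf_sup := -⨅ x, ∑ j, w₀ j * g j x)
    (hinf_sup := ⟨by rintro _ ⟨w, hw, rfl⟩; exact neg_le_neg (isMaxOn_iff.1 hmax w hw),
      fun b hb => hb ⟨w₀, hw₀, rfl⟩⟩)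
    (inf_x := fun x => -⨆ j, g j x)
    (hinf_x := fun x _ => ⟨by
      rintro _ ⟨w, hw, rfl⟩
      exact neg_le_neg (sum_mul_le_ciSup_of_mem_stdSimplex hw _), fun b hb => by
      obtain ⟨j₀, hj₀⟩ := exists_eq_ciSup_of_finite (f := fun j => g j x)
      simpa [Pi.single_apply, hj₀] using hb ⟨_, single_mem_stdSimplex ℝ j₀, rfl⟩⟩)
    (sup_inf := -⨆ j, g j x₀)
    (hsup_inf := ⟨by rintro _ ⟨x, -, rfl⟩; exact neg_le_neg (isMinOn_iff.1 hx₀ x trivial),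
      fun b hb => hb ⟨x₀, trivial, rfl⟩⟩)
  exact neg_inj.1 this

theorem AffineMap.apply_eq_of_isMinOn_sum_mul_norm_rpow {V ι E : Type*} [AddCommGroup V]
    [Module ℝ V] [Fintype ι] [NormedAddCommGroup E] [NormedSpace ℝ E] [StrictConvexSpace ℝ E]
    (A : V →ᵃ[ℝ] ι → E) {w : ι → ℝ} (hw : 0 ≤ w) {q : ℝ} (hq : 1 < q) {a b : V}
    (ha : IsMinOn (fun x => ∑ j, w j * ‖A x j‖ ^ q) univ a)
    (hb : IsMinOn (fun x => ∑ j, w j * ‖A x j‖ ^ q) univ b) {j : ι} (hj : w j ≠ 0) :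
    A a j = A b j := by
  by_contra hne
  set c : V := (1 / 2 : ℝ) • a + (1 / 2 : ℝ) • b
  have hAc : ∀ k, A c k = (1 / 2 : ℝ) • A a k + (1 / 2 : ℝ) • A b k := fun k => by
    rw [Convex.combo_affine_apply (by norm_num)]; rfl
  have hterm : ∀ k, w k * ‖A c k‖ ^ q
      ≤ (1 / 2 : ℝ) * (w k * ‖A a k‖ ^ q) + (1 / 2 : ℝ) * (w k * ‖A b k‖ ^ q) := fun k => by
    have := (convexOn_norm_rpow (E := E) hq.le).2 (mem_univ (A a k)) (mem_univ (A b k))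
      (by norm_num : (0 : ℝ) ≤ 1 / 2) (by norm_num : (0 : ℝ) ≤ 1 / 2) (by norm_num)
    rw [hAc]
    simp only [smul_eq_mul] at this
    linarith [mul_le_mul_of_nonneg_left this (hw k)]
  have hterm_lt : w j * ‖A c j‖ ^ q
      < (1 / 2 : ℝ) * (w j * ‖A a j‖ ^ q) + (1 / 2 : ℝ) * (w j * ‖A b j‖ ^ q) := by
    have := (strictConvexOn_norm_rpow (E := E) hq).2 (mem_univ (A a j)) (mem_univ (A b j)) hne
      (by norm_num : (0 : ℝ) < 1 / 2) (by norm_num : (0 : ℝ) < 1 / 2) (by norm_num)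
    rw [hAc]
    simp only [smul_eq_mul] at this
    linarith [mul_lt_mul_of_pos_left this (lt_of_le_of_ne (hw j) (Ne.symm hj))]
  have hsum := Finset.sum_lt_sum (fun k _ => hterm k) ⟨j, Finset.mem_univ j, hterm_lt⟩
  rw [Finset.sum_add_distrib, ← Finset.mul_sum, ← Finset.mul_sum] at hsum
  linarith [isMinOn_iff.1 ha c trivial, isMinOn_iff.1 hb c trivial]

def Matrix.HaarCondition {ι κ K : Type*} [Fintype κ] [DecidableEq κ] [Semiring K]
    (Ψ : Matrix ι κ K) : Prop :=
  ∀ ρ : κ → ι, Function.Injective ρ → IsUnit (Ψ.submatrix ρ id)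

namespace Matrix.HaarCondition

variable {ι κ K : Type*} [Fintype κ] [DecidableEq κ]

theorem eq_of_mulVec_eq_on [Field K] {Ψ : Matrix ι κ K} (hΨ : Ψ.HaarCondition)
    {s : Finset ι} (hs : Fintype.card κ ≤ s.card) {a b : κ → K}
    (hab : ∀ i ∈ s, (Ψ *ᵥ a) i = (Ψ *ᵥ b) i) : a = b := by
  obtain ⟨e⟩ : Nonempty (κ ↪ s) := Function.Embedding.nonempty_of_card_le (by simpa using hs)
  have hρ : Function.Injective fun k => (e k : ι) := Subtype.val_injective.comp e.injective
  refine Matrix.mulVec_injective_iff_isUnit.2 (hΨ _ hρ) ?_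
  ext k
  exact hab _ (e k).2

theorem exists_mulVec_eq_on [Fintype ι] [Field K] {Ψ : Matrix ι κ K} (hΨ : Ψ.HaarCondition)
    (hκι : Fintype.card κ ≤ Fintype.card ι) {s : Finset ι} (hs : s.card ≤ Fintype.card κ)
    (f : ι → K) : ∃ a, ∀ i ∈ s, (Ψ *ᵥ a) i = f i := by
  obtain ⟨t, hst, ht⟩ := Finset.exists_superset_card_eq hs hκι
  let e : κ ≃ t := Fintype.equivOfCardEq (by simp [ht])
  have hρ : Function.Injective fun k => (e k : ι) := Subtype.val_injective.comp e.injective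
  obtain ⟨a, ha⟩ := Matrix.mulVec_surjective_iff_isUnit.2 (hΨ _ hρ) fun k => f (e k)
  refine ⟨a, fun i hi => ?_⟩
  have h : (Ψ *ᵥ a) (e (e.symm ⟨i, hst hi⟩)) = f (e (e.symm ⟨i, hst hi⟩)) := congrFun ha _
  simpa using h

theorem card_le_card_filter_ne_zero [Fintype ι] [NormedField K] {Ψ : Matrix ι κ K}
    (hΨ : Ψ.HaarCondition) (hκι : Fintype.card κ ≤ Fintype.card ι) (f : ι → K) {w : ι → ℝ}
    {q : ℝ} (hq : q ≠ 0) (hpos : ∀ a, 0 < ∑ j, w j * ‖f j - (Ψ *ᵥ a) j‖ ^ q) :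
    Fintype.card κ ≤ (Finset.univ.filter fun j => w j ≠ 0).card := by
  by_contra! hlt
  obtain ⟨a, ha⟩ := hΨ.exists_mulVec_eq_on hκι hlt.le f
  refine (hpos a).ne' (Finset.sum_eq_zero fun j _ => ?_)
  by_cases hj : w j = 0
  · simp [hj]
  · simp [ha j (by simp [hj]), Real.zero_rpow hq]

end Matrix.HaarCondition

section Residual

variable {ι κ : Type*} [Fintype κ] (f : ι → ℂ) (Ψ : Matrix ι κ ℂ)

noncomputable def Matrix.residual : (κ → ℂ) →ᵃ[ℝ] ι → ℂ :=
  AffineMap.const ℝ (κ → ℂ) f - (Ψ.mulVecLin.restrictScalars ℝ).toAffineMap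

theorem Matrix.residual_apply (a : κ → ℂ) (j : ι) : Ψ.residual f a j = f j - (Ψ *ᵥ a) j := rfl

theorem convexOn_norm_residual_rpow (j : ι) {q : ℝ} (hq : 1 ≤ q) :
    ConvexOn ℝ univ fun a => ‖f j - (Ψ *ᵥ a) j‖ ^ q :=
  (convexOn_norm_rpow hq).comp_affineMap
    ((LinearMap.proj (R := ℝ) (φ := fun _ : ι => ℂ) j).toAffineMap.comp (Ψ.residual f))

variable {f Ψ}

theorem isMinOn_sum_mul_norm_rpow_of_isMaxOn [Fintype ι] [Nonempty ι] {q : ℝ} (hq : 1 ≤ q)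
    {a₀ : κ → ℂ} (ha₀ : IsMinOn (fun a => ⨆ j, ‖f j - (Ψ *ᵥ a) j‖) univ a₀) {w₀ : ι → ℝ}
    (hw₀ : w₀ ∈ stdSimplex ℝ ι)
    (hmax : IsMaxOn (fun w => ⨅ a, ∑ j, w j * ‖f j - (Ψ *ᵥ a) j‖ ^ q) (stdSimplex ℝ ι) w₀) :
    IsMinOn (fun a => ∑ j, w₀ j * ‖f j - (Ψ *ᵥ a) j‖ ^ q) univ a₀ ∧
      (⨅ a, ∑ j, w₀ j * ‖f j - (Ψ *ᵥ a) j‖ ^ q) = (⨆ j, ‖f j - (Ψ *ᵥ a₀) j‖) ^ q := by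
  have hq₀ : 0 ≤ q := by linarith
  have hsup : ∀ a, (⨆ j, ‖f j - (Ψ *ᵥ a) j‖ ^ q) = (⨆ j, ‖f j - (Ψ *ᵥ a) j‖) ^ q :=
    fun a => ciSup_rpow (fun j => norm_nonneg _) hq₀
  have hvalue := iInf_sum_mul_eq_ciSup_of_isMaxOn
    (fun j => (by fun_prop : Continuous fun a => f j - (Ψ *ᵥ a) j).norm.rpow_const
      fun _ => Or.inr hq₀)
    (fun j => convexOn_norm_residual_rpow f Ψ j hq) (fun j a => by positivity)
    (isMinOn_iff.2 fun a _ => by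
      rw [hsup, hsup]
      exact Real.rpow_le_rpow (Real.iSup_nonneg fun j => norm_nonneg _)
        (isMinOn_iff.1 ha₀ a trivial) hq₀) hw₀ hmax
  rw [hsup] at hvalue
  refine ⟨isMinOn_iff.2 fun a _ => ?_, hvalue⟩
  calc ∑ j, w₀ j * ‖f j - (Ψ *ᵥ a₀) j‖ ^ q ≤ ⨆ j, ‖f j - (Ψ *ᵥ a₀) j‖ ^ q :=
        sum_mul_le_ciSup_of_mem_stdSimplex hw₀ _
    _ = ⨅ a, ∑ j, w₀ j * ‖f j - (Ψ *ᵥ a) j‖ ^ q := by rw [hsup, hvalue]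
    _ ≤ ∑ j, w₀ j * ‖f j - (Ψ *ᵥ a) j‖ ^ q :=
        ciInf_le ⟨0, forall_mem_range.2 fun b =>
          Finset.sum_nonneg fun j _ => mul_nonneg (hw₀.1 j) (by positivity)⟩ a

theorem Matrix.HaarCondition.eq_of_isMinOn_sum_mul_norm_rpow [Fintype ι] [DecidableEq κ]
    (hΨ : Ψ.HaarCondition) {w : ι → ℝ} (hw : 0 ≤ w) {q : ℝ} (hq : 1 < q)
    (hsupport : Fintype.card κ ≤ (Finset.univ.filter fun j => w j ≠ 0).card) {a b : κ → ℂ}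
    (ha : IsMinOn (fun x => ∑ j, w j * ‖f j - (Ψ *ᵥ x) j‖ ^ q) univ a)
    (hb : IsMinOn (fun x => ∑ j, w j * ‖f j - (Ψ *ᵥ x) j‖ ^ q) univ b) : a = b := by
  refine hΨ.eq_of_mulVec_eq_on hsupport fun j hj => ?_
  have := (Ψ.residual f).apply_eq_of_isMinOn_sum_mul_norm_rpow hw hq ha hb
    (Finset.mem_filter.1 hj).2
  simpa [Matrix.residual_apply] using this

end Residual

theorem dual_weighted_unique_minimizer_general
    (m n : ℕ) (hnm : n + 1 ≤ m)
    (f : Fin m → ℂ) (Ψ : Matrix (Fin m) (Fin n) ℂ)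
    (hHaar : ∀ ρ : Fin n → Fin m, Function.Injective ρ →
      IsUnit (Matrix.of fun i j => Ψ (ρ i) j : Matrix (Fin n) (Fin n) ℂ))
    (q : ℝ) (hq : 1 < q)
    (hη : 0 < ⨅ a : Fin n → ℂ, ⨆ j, ‖f j - Ψ.mulVec a j‖)
    (astar : Fin n → ℂ)
    (hastar : (⨆ j, ‖f j - Ψ.mulVec astar j‖)
      = ⨅ a : Fin n → ℂ, ⨆ j, ‖f j - Ψ.mulVec a j‖)
    (wstar : Fin m → ℝ) (hwstar0 : ∀ j, 0 ≤ wstar j) (hwstar1 : ∑ j, wstar j = 1)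
    (hwstarMax : ∀ w : Fin m → ℝ, (∀ j, 0 ≤ w j) → ∑ j, w j = 1 →
      (⨅ a : Fin n → ℂ, ∑ j, w j * ‖f j - Ψ.mulVec a j‖ ^ q)
        ≤ ⨅ a : Fin n → ℂ, ∑ j, wstar j * ‖f j - Ψ.mulVec a j‖ ^ q) :
    (∀ a : Fin n → ℂ,
        (∑ j, wstar j * ‖f j - Ψ.mulVec astar j‖ ^ q)
          ≤ ∑ j, wstar j * ‖f j - Ψ.mulVec a j‖ ^ q)
    ∧ (∀ a : Fin n → ℂ,
        (∑ j, wstar j * ‖f j - Ψ.mulVec a j‖ ^ q)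
          = (∑ j, wstar j * ‖f j - Ψ.mulVec astar j‖ ^ q) → a = astar)
    ∧ (∑ j, wstar j * ‖f j - Ψ.mulVec astar j‖ ^ q)
        = (⨅ a : Fin n → ℂ, ∑ j, wstar j * ‖f j - Ψ.mulVec a j‖ ^ q)
    ∧ (⨅ a : Fin n → ℂ, ∑ j, wstar j * ‖f j - Ψ.mulVec a j‖ ^ q)
        = (⨅ a : Fin n → ℂ, ⨆ j, ‖f j - Ψ.mulVec a j‖) ^ q := by
  have : Nonempty (Fin m) := ⟨⟨0, by omega⟩⟩
  have hΨ : Ψ.HaarCondition := hHaar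
  have hbdd : BddBelow (range fun a => ⨆ j, ‖f j - Ψ.mulVec a j‖) :=
    ⟨0, forall_mem_range.2 fun a => Real.iSup_nonneg fun j => norm_nonneg _⟩
  obtain ⟨hmin, hvalue⟩ := isMinOn_sum_mul_norm_rpow_of_isMaxOn hq.le
    (isMinOn_iff.2 fun a _ => hastar ▸ ciInf_le hbdd a) ⟨hwstar0, hwstar1⟩
    (isMaxOn_iff.2 fun w hw => hwstarMax w hw.1 hw.2)
  rw [hastar] at hvalue
  have hstar : (∑ j, wstar j * ‖f j - Ψ.mulVec astar j‖ ^ q)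
      = ⨅ a, ∑ j, wstar j * ‖f j - Ψ.mulVec a j‖ ^ q :=
    (ciInf_eq_of_forall_ge_of_forall_gt_exists_lt (isMinOn_iff.1 hmin · trivial)
      fun _ h => ⟨astar, h⟩).symm
  refine ⟨(isMinOn_iff.1 hmin · trivial), fun a ha => ?_, hstar, hvalue⟩
  have hsupport := hΨ.card_le_card_filter_ne_zero (by simp; omega) f (by positivity) fun a =>
    calc (0 : ℝ) < (⨅ a : Fin n → ℂ, ⨆ j, ‖f j - Ψ.mulVec a j‖) ^ q := Real.rpow_pos_of_pos hη q
      _ = _ := by rw [← hvalue, ← hstar]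
      _ ≤ _ := isMinOn_iff.1 hmin a trivial
  exact hΨ.eq_of_isMinOn_sum_mul_norm_rpow hwstar0 hq hsupport
    (isMinOn_iff.2 fun b _ => ha.trans_le (isMinOn_iff.1 hmin b trivial)) hmin

/-- Theorem 2.1(2): for `q > 1`, if `a*` attains the minimax value `η* > 0` and `w* ∈ S`
maximizes `d_q` over the simplex, then `a*` is the unique minimizer of the weighted
problem `a ↦ ∑_j w*_j |f_j − (Ψ a)_j|^q`, and the minimum value equals
`d_q(w*) = (η*)^q`. -/
theorem dual_weighted_unique_minimizer
    (m n : ℕ) (hm : 0 < m) (hn : 0 < n) (hnm : n + 1 ≤ m)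
    (f : Fin m → ℂ) (Ψ : Matrix (Fin m) (Fin n) ℂ)
    (hHaar : ∀ ρ : Fin n → Fin m, Function.Injective ρ →
      IsUnit (Matrix.of fun i j => Ψ (ρ i) j : Matrix (Fin n) (Fin n) ℂ))
    (q : ℝ) (hq : 1 < q)
    (hη : 0 < ⨅ a : Fin n → ℂ, ⨆ j, ‖f j - Ψ.mulVec a j‖)
    (astar : Fin n → ℂ)
    (hastar : (⨆ j, ‖f j - Ψ.mulVec astar j‖)
      = ⨅ a : Fin n → ℂ, ⨆ j, ‖f j - Ψ.mulVec a j‖)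
    (wstar : Fin m → ℝ) (hwstar0 : ∀ j, 0 ≤ wstar j) (hwstar1 : ∑ j, wstar j = 1)
    (hwstarMax : ∀ w : Fin m → ℝ, (∀ j, 0 ≤ w j) → ∑ j, w j = 1 →
      (⨅ a : Fin n → ℂ, ∑ j, w j * ‖f j - Ψ.mulVec a j‖ ^ q)
        ≤ ⨅ a : Fin n → ℂ, ∑ j, wstar j * ‖f j - Ψ.mulVec a j‖ ^ q) :
    (∀ a : Fin n → ℂ,
        (∑ j, wstar j * ‖f j - Ψ.mulVec astar j‖ ^ q)
          ≤ ∑ j, wstar j * ‖f j - Ψ.mulVec a j‖ ^ q)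
    ∧ (∀ a : Fin n → ℂ,
        (∑ j, wstar j * ‖f j - Ψ.mulVec a j‖ ^ q)
          = (∑ j, wstar j * ‖f j - Ψ.mulVec astar j‖ ^ q) → a = astar)
    ∧ (∑ j, wstar j * ‖f j - Ψ.mulVec astar j‖ ^ q)
        = (⨅ a : Fin n → ℂ, ∑ j, wstar j * ‖f j - Ψ.mulVec a j‖ ^ q)
    ∧ (⨅ a : Fin n → ℂ, ∑ j, wstar j * ‖f j - Ψ.mulVec a j‖ ^ q)
        = (⨅ a : Fin n → ℂ, ⨆ j, ‖f j - Ψ.mulVec a j‖) ^ q :=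
  dual_weighted_unique_minimizer_general m n hnm f Ψ hHaar q hq hη astar hastar wstar hwstar0
    hwstar1 hwstarMax
end

section
/- (Gradient of the L_2 dual function, Proposition 4.1) Let w ∈ ℝ^m satisfy w_j > 0 for all j and set W = diag(w). Then d is differentiable at w and its gradient is ∇d(w) = (|r_1(w)|², …, |r_m(w)|²) ∈ ℝ^m, where r(w) = f − Ψ (Ψᴴ W Ψ)^{−1} Ψᴴ W f. -/
open scoped BigOperators

/-- The residual `r(w) = f − Ψ a(w)` of the weighted least-squares problem, where
`a(w) = (Ψᴴ W Ψ)⁻¹ Ψᴴ W f` and `W = diag(w)`. -/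
noncomputable def lsResidual (m n : ℕ) (f : Fin m → ℂ) (Ψ : Matrix (Fin m) (Fin n) ℂ)
    (w : Fin m → ℝ) : Fin m → ℂ :=
  f - Ψ.mulVec
    ((Ψ.conjTranspose * Matrix.diagonal (fun j => (w j : ℂ)) * Ψ)⁻¹.mulVec
      ((Ψ.conjTranspose * Matrix.diagonal (fun j => (w j : ℂ))).mulVec f))

/-- The `L_2` dual function `d(w) = ∑_j w_j |r_j(w)|²`. -/
noncomputable def lsDual (m n : ℕ) (f : Fin m → ℂ) (Ψ : Matrix (Fin m) (Fin n) ℂ)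
    (w : Fin m → ℝ) : ℝ :=
  ∑ j, w j * ‖lsResidual m n f Ψ w j‖ ^ 2

/-!
For positive weights `v`, `d v` is the minimum over `a` of the linear functional
`φ a : v ↦ ∑ j, v j * ‖f j - (Ψ *ᵥ a) j‖ ^ 2`, attained at `a(v)` (normal equations and Pythagoras
in the `W`-weighted inner product). Testing the minimum at `v` with `a(w)` and at `w` with `a(v)`
squeezes `d v - d w - φ (a w) (v - w)` between `(φ (a v) - φ (a w)) (v - w)` and `0`, so continuity
of `a` at `w` (the Gram matrix `Ψᴴ W Ψ` is positive definite, hence invertible near `w`) makes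
`φ (a w)`, whose coefficients are `‖r_j(w)‖²`, the derivative of `d` at `w`.
-/

open Filter Topology Asymptotics

theorem hasFDerivAt_of_forall_le_linear {E X : Type*} [NormedAddCommGroup E] [NormedSpace ℝ E]
    {d : E → ℝ} {φ : X → E →L[ℝ] ℝ} {x : E → X} {w : E}
    (hle : ∀ᶠ v in 𝓝 w, ∀ y, d v ≤ φ y v) (heq : ∀ v, d v = φ (x v) v)
    (hx : ContinuousAt (φ ∘ x) w) : HasFDerivAt d (φ (x w)) w := by
  have hbound : ∀ᶠ v in 𝓝 w,
      ‖d v - d w - φ (x w) (v - w)‖ ≤ ‖φ (x v) - φ (x w)‖ * ‖v - w‖ := by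
    filter_upwards [hle] with v hv
    have upper : d v - d w - φ (x w) (v - w) ≤ 0 := by
      have hvw := hv (x w)
      rw [map_sub, heq w]
      linarith
    have lower : (φ (x v) - φ (x w)) (v - w) ≤ d v - d w - φ (x w) (v - w) := by
      have hwv := hle.self_of_nhds (x v)
      rw [sub_apply, map_sub, heq v]
      linarith
    have hop := (φ (x v) - φ (x w)).le_opNorm (v - w)
    rw [Real.norm_eq_abs] at hop ⊢
    have hneg := neg_abs_le ((φ (x v) - φ (x w)) (v - w))
    exact abs_le.2 ⟨by linarith, by linarith [abs_nonneg ((φ (x v) - φ (x w)) (v - w))]⟩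
  have hsmall : (fun v => ‖φ (x v) - φ (x w)‖) =o[𝓝 w] (fun _ => (1 : ℝ)) :=
    (isLittleO_one_iff ℝ).2 (tendsto_iff_norm_sub_tendsto_zero.1 hx)
  have hbound' := hbound.mono fun _ hv => hv.trans (Real.le_norm_self _)
  refine HasFDerivAt.of_isLittleO ((IsBigO.of_bound' hbound').trans_isLittleO ?_)
  exact isLittleO_norm_right.1
    (by simpa using hsmall.mul_isBigO (isBigO_refl (fun v => ‖v - w‖) _))

open Matrix ComplexOrder

theorem Matrix.mulVec_injective_of_rank_eq_card {ι κ K : Type*} [Fintype κ] [Field K]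
    {A : Matrix ι κ K} (hA : A.rank = Fintype.card κ) : Function.Injective A.mulVec :=
  mulVec_injective_iff.2 <| linearIndependent_iff_card_eq_finrank_span.2 <| by
    rw [← hA, rank_eq_finrank_span_cols]; rfl

theorem Matrix.posDef_conjTranspose_mul_diagonal_mul {𝕜 ι κ : Type*} [RCLike 𝕜] [Fintype ι]
    [Fintype κ] [DecidableEq ι] {A : Matrix ι κ 𝕜} (hA : Function.Injective A.mulVec)
    {w : ι → ℝ} (hw : ∀ j, 0 < w j) : (Aᴴ * diagonal (fun j => (w j : 𝕜)) * A).PosDef :=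
  (PosDef.diagonal fun j => by simpa using hw j).conjTranspose_mul_mul_same hA

section WeightedSqNorm

variable {ι : Type*} [Fintype ι]

noncomputable def weightedSqNormCLM (r : ι → ℂ) : (ι → ℝ) →L[ℝ] ℝ :=
  ∑ j, ‖r j‖ ^ 2 • ContinuousLinearMap.proj j

theorem weightedSqNormCLM_apply (r : ι → ℂ) (v : ι → ℝ) :
    weightedSqNormCLM r v = ∑ j, v j * ‖r j‖ ^ 2 := by
  simp [weightedSqNormCLM, mul_comm]

theorem continuous_weightedSqNormCLM : Continuous (weightedSqNormCLM (ι := ι)) :=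
  continuous_finsetSum _ fun j _ => ((continuous_apply j).norm.pow 2).smul continuous_const

theorem sum_mul_norm_add_sq_of_orthogonal [DecidableEq ι] (w : ι → ℝ) {r z : ι → ℂ}
    (horth : star z ⬝ᵥ (diagonal (fun j => (w j : ℂ)) *ᵥ r) = 0) :
    ∑ j, w j * ‖r j + z j‖ ^ 2 = ∑ j, w j * ‖r j‖ ^ 2 + ∑ j, w j * ‖z j‖ ^ 2 := by
  have hcross : ∑ j, w j * (r j * starRingEnd ℂ (z j)).re = 0 := by
    have := congrArg Complex.re horth
    rw [dotProduct, Complex.re_sum, Complex.zero_re] at this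
    refine (Finset.sum_congr rfl fun j _ => ?_).trans this
    rw [mulVec_diagonal, Pi.star_apply, Complex.star_def, ← Complex.re_ofReal_mul]
    ring_nf
  simp only [Complex.sq_norm, Complex.normSq_add, mul_add, Finset.sum_add_distrib]
  simp only [mul_left_comm _ (2 : ℝ), ← Finset.mul_sum, hcross, mul_zero, add_zero]

end WeightedSqNorm

section LeastSquares

variable {m n : ℕ} (f : Fin m → ℂ) (Ψ : Matrix (Fin m) (Fin n) ℂ) (w : Fin m → ℝ)

noncomputable def lsCoeff : Fin n → ℂ :=
  (Ψᴴ * diagonal (fun j => (w j : ℂ)) * Ψ)⁻¹ *ᵥ ((Ψᴴ * diagonal (fun j => (w j : ℂ))) *ᵥ f)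

theorem lsResidual_eq : lsResidual m n f Ψ w = f - Ψ *ᵥ lsCoeff f Ψ w := rfl

theorem lsDual_eq_weightedSqNormCLM :
    lsDual m n f Ψ w = weightedSqNormCLM (f - Ψ *ᵥ lsCoeff f Ψ w) w := by
  rw [weightedSqNormCLM_apply, lsDual, lsResidual_eq]

variable {Ψ w}

theorem conjTranspose_mul_diagonal_mulVec_lsResidual
    (h : IsUnit (Ψᴴ * diagonal (fun j => (w j : ℂ)) * Ψ).det) :
    (Ψᴴ * diagonal (fun j => (w j : ℂ))) *ᵥ lsResidual m n f Ψ w = 0 := by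
  rw [lsResidual_eq, mulVec_sub, lsCoeff, mulVec_mulVec, mulVec_mulVec, mul_nonsing_inv _ h,
    one_mulVec, sub_self]

theorem lsDual_le (hw : ∀ j, 0 ≤ w j) (h : IsUnit (Ψᴴ * diagonal (fun j => (w j : ℂ)) * Ψ).det)
    (y : Fin n → ℂ) : lsDual m n f Ψ w ≤ ∑ j, w j * ‖(f - Ψ *ᵥ y) j‖ ^ 2 := by
  have hsplit : f - Ψ *ᵥ y = lsResidual m n f Ψ w + Ψ *ᵥ (lsCoeff f Ψ w - y) := by
    rw [lsResidual_eq, mulVec_sub]; abel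
  have horth : star (Ψ *ᵥ (lsCoeff f Ψ w - y)) ⬝ᵥ
      (diagonal (fun j => (w j : ℂ)) *ᵥ lsResidual m n f Ψ w) = 0 := by
    rw [star_mulVec, ← dotProduct_mulVec, mulVec_mulVec,
      conjTranspose_mul_diagonal_mulVec_lsResidual f h, dotProduct_zero]
  rw [lsDual, hsplit]
  simp only [Pi.add_apply]
  rw [sum_mul_norm_add_sq_of_orthogonal w horth]
  exact le_add_of_nonneg_right (Finset.sum_nonneg fun j _ => mul_nonneg (hw j) (sq_nonneg _))

theorem continuousAt_lsCoeff (h : IsUnit (Ψᴴ * diagonal (fun j => (w j : ℂ)) * Ψ).det) :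
    ContinuousAt (lsCoeff f Ψ) w := by
  have hG : Continuous fun v : Fin m → ℝ => Ψᴴ * diagonal (fun j => (v j : ℂ)) * Ψ := by fun_prop
  have hC : Continuous fun v : Fin m → ℝ => (Ψᴴ * diagonal (fun j => (v j : ℂ))) *ᵥ f := by
    fun_prop
  have hinv : ContinuousAt (fun v : Fin m → ℝ => (Ψᴴ * diagonal (fun j => (v j : ℂ)) * Ψ)⁻¹) w :=
    ContinuousAt.comp (g := Inv.inv)
      (f := fun v : Fin m → ℝ => Ψᴴ * diagonal (fun j => (v j : ℂ)) * Ψ)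
      (continuousAt_matrix_inv _ (NormedRing.inverse_continuousAt h.unit)) hG.continuousAt
  exact (continuous_fst.matrix_mulVec continuous_snd).continuousAt.comp₂ hinv hC.continuousAt

end LeastSquares

theorem gradient_of_dual_general
    (m n : ℕ)
    (f : Fin m → ℂ) (Ψ : Matrix (Fin m) (Fin n) ℂ) (hrank : Ψ.rank = n)
    (w : Fin m → ℝ) (hw : ∀ j, 0 < w j) :
    ∃ L : (Fin m → ℝ) →L[ℝ] ℝ,
      HasFDerivAt (lsDual m n f Ψ) L w ∧
      ∀ v : Fin m → ℝ, L v = ∑ j, ‖lsResidual m n f Ψ w j‖ ^ 2 * v j := by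
  have hΨ := mulVec_injective_of_rank_eq_card (A := Ψ) (by rw [hrank, Fintype.card_fin])
  have hunit {v : Fin m → ℝ} (hv : ∀ j, 0 < v j) :
      IsUnit (Ψᴴ * diagonal (fun j => (v j : ℂ)) * Ψ).det :=
    (isUnit_iff_isUnit_det _).1 (posDef_conjTranspose_mul_diagonal_mul hΨ hv).isUnit
  have hpos : ∀ᶠ v in 𝓝 w, ∀ j, 0 < v j :=
    eventually_all.2 fun j => ((continuous_apply j).tendsto w).eventually (lt_mem_nhds (hw j))
  refine ⟨weightedSqNormCLM (lsResidual m n f Ψ w), ?_, fun v => by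
    simp only [weightedSqNormCLM_apply, mul_comm]⟩
  refine hasFDerivAt_of_forall_le_linear (φ := fun y => weightedSqNormCLM (f - Ψ *ᵥ y))
    (x := lsCoeff f Ψ) ?_ (fun v => lsDual_eq_weightedSqNormCLM f Ψ v) ?_
  · filter_upwards [hpos] with v hv y
    simpa only [weightedSqNormCLM_apply] using lsDual_le f (fun j => (hv j).le) (hunit hv) y
  · have hφ : Continuous fun y : Fin n → ℂ => weightedSqNormCLM (f - Ψ *ᵥ y) :=
      continuous_weightedSqNormCLM.comp (by fun_prop)
    exact hφ.continuousAt.comp (continuousAt_lsCoeff f (hunit hw))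

/-- Gradient of the `L_2` dual function (Proposition 4.1): for `w > 0`, `d` is
differentiable at `w` with gradient `(|r_1(w)|², …, |r_m(w)|²)`. -/
theorem gradient_of_dual
    (m n : ℕ) (hn : 0 < n) (hnm : n ≤ m)
    (f : Fin m → ℂ) (Ψ : Matrix (Fin m) (Fin n) ℂ) (hrank : Ψ.rank = n)
    (w : Fin m → ℝ) (hw : ∀ j, 0 < w j) :
    ∃ L : (Fin m → ℝ) →L[ℝ] ℝ,
      HasFDerivAt (lsDual m n f Ψ) L w ∧
      ∀ v : Fin m → ℝ, L v = ∑ j, ‖lsResidual m n f Ψ w j‖ ^ 2 * v j :=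
  gradient_of_dual_general m n f Ψ hrank w hw
end
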